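/- In the two-sided replicating character string model, the sequence ((Z_k, X̄_k), k ∈ ℤ) is strictly stationary under P, where X̄ is the sequence obtained by placing the values of the input sequence X at the positions where Z ∈ {M,D} and the value 0 elsewhere. -/

import Mathlib

open MeasureTheory ProbabilityTheory Filter Set

/-- The absolute regularity (β-mixing) coefficient between two sub-σ-fields. -/
noncomputable def betaMix {Ω : Type*} {mΩ : MeasurableSpace Ω} (P : Measure Ω)
    (𝓐 𝓑 : MeasurableSpace Ω) : ℝ :=
  sSup { x : ℝ | ∃ (I J : ℕ) (f : Fin I → Set Ω) (g : Fin J → Set Ω),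
    (∀ i, MeasurableSet[𝓐] (f i)) ∧ (∀ j, MeasurableSet[𝓑] (g j)) ∧
    Pairwise (Function.onFun Disjoint f) ∧ (⋃ i, f i) = Set.univ ∧
    Pairwise (Function.onFun Disjoint g) ∧ (⋃ j, g j) = Set.univ ∧
    x = (1/2) * ∑ i, ∑ j,
      |(P (f i ∩ g j)).toReal - (P (f i)).toReal * (P (g j)).toReal| }

/-- The strong mixing (α) coefficient between two sub-σ-fields. -/
noncomputable def alphaMix {Ω : Type*} {mΩ : MeasurableSpace Ω} (P : Measure Ω)
    (𝓐 𝓑 : MeasurableSpace Ω) : ℝ :=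
  sSup { x : ℝ | ∃ (A B : Set Ω), MeasurableSet[𝓐] A ∧ MeasurableSet[𝓑] B ∧
    x = |(P (A ∩ B)).toReal - (P A).toReal * (P B).toReal| }

/-- β mixing coefficient of a two-sided sequence with gap `n`. -/
noncomputable def betaSeq {Ω E : Type*} {mΩ : MeasurableSpace Ω} [MeasurableSpace E]
    (X : ℤ → Ω → E) (n : ℕ) (P : Measure Ω) : ℝ :=
  betaMix P (⨆ k : {k : ℤ // k ≤ 0}, MeasurableSpace.comap (X k) inferInstance)
            (⨆ k : {k : ℤ // (n : ℤ) ≤ k}, MeasurableSpace.comap (X k) inferInstance)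

/-- α mixing coefficient of a two-sided sequence with gap `n`. -/
noncomputable def alphaSeq {Ω E : Type*} {mΩ : MeasurableSpace Ω} [MeasurableSpace E]
    (X : ℤ → Ω → E) (n : ℕ) (P : Measure Ω) : ℝ :=
  alphaMix P (⨆ k : {k : ℤ // k ≤ 0}, MeasurableSpace.comap (X k) inferInstance)
             (⨆ k : {k : ℤ // (n : ℤ) ≤ k}, MeasurableSpace.comap (X k) inferInstance)

/-- Strict stationarity of a two-sided sequence. -/
def IsStationarySeq {Ω E : Type*} {mΩ : MeasurableSpace Ω} [MeasurableSpace E]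
    (P : Measure Ω) (X : ℤ → Ω → E) : Prop :=
  ∀ j : ℤ, P.map (fun ω => fun k : ℤ => X (k + j) ω) = P.map (fun ω => fun k : ℤ => X k ω)

/-- Mutation / Insertion / Deletion symbols. -/
inductive MID | M | I | D
deriving DecidableEq

instance : MeasurableSpace MID := ⊤

/-
Let `mdCount z m` be the signed number of M/D positions of `z` in `(0, m]`. It inverts the
enumeration `ζ`, so `X̄ = scatter Z X`, where `scatter z x k = x (mdCount z k)` at M/D positions
and `0` elsewhere. As `mdCount` is an additive cocycle of the shift, shifting `(Z, X̄)` by `j`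
amounts to applying `scatter` to `(Z(· + j), X(· + mdCount Z j))`. By independence the law of
`(Z, X)` is a product, and this skew shift preserves it: the law of `Z` is invariant under the
shift by `j`, and the law of `X` under every shift, whatever amount `Z` selects.
-/

namespace MID

def IsMD (s : MID) : Prop := s = M ∨ s = D

instance : DecidablePred IsMD := fun s => by unfold IsMD; infer_instance

end MID

section Sequences

variable {α : Type*}

def shiftSeq (j : ℤ) (f : ℤ → α) : ℤ → α := fun i => f (i + j)

theorem measurable_shiftSeq [MeasurableSpace α] (j : ℤ) : Measurable (shiftSeq (α := α) j) :=
  measurable_pi_lambda _ fun i => measurable_pi_apply (i + j)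

theorem IsStationarySeq.measurePreserving_shiftSeq {Ω : Type*} {mΩ : MeasurableSpace Ω}
    [MeasurableSpace α] {P : Measure Ω} {X : ℤ → Ω → α} (hX : IsStationarySeq P X)
    (hmX : ∀ k, Measurable (X k)) (j : ℤ) :
    MeasurePreserving (shiftSeq j) (P.map fun ω k => X k ω) (P.map fun ω k => X k ω) := by
  refine ⟨measurable_shiftSeq j, ?_⟩
  rw [Measure.map_map (measurable_shiftSeq j) (measurable_pi_lambda _ hmX)]
  exact hX j

theorem Int.fun_eq_of_apply_zero_of_add_one {f g d : ℤ → ℤ} (h0 : f 0 = g 0)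
    (hf : ∀ k, f (k + 1) = f k + d k) (hg : ∀ k, g (k + 1) = g k + d k) : f = g := by
  funext k
  induction k using Int.induction_on with
  | zero => exact h0
  | succ k ih => rw [hf, hg, ih]
  | pred k ih =>
    have hf' := hf (-(k : ℤ) - 1)
    have hg' := hg (-(k : ℤ) - 1)
    rw [sub_add_cancel] at hf' hg'
    omega

theorem measurable_apply_of_measurable_index {β ι E : Type*} [MeasurableSpace β]
    [MeasurableSpace ι] [Countable ι] [MeasurableSingletonClass ι] [MeasurableSpace E]
    {f : β → ι → E} (hf : Measurable f) {c : β → ι} (hc : Measurable c) :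
    Measurable fun b => f b (c b) :=
  (measurable_from_prod_countable_left (f := fun q : (ι → E) × ι => q.1 q.2)
    fun i => measurable_pi_apply i).comp (hf.prodMk hc)

end Sequences

noncomputable def mdCount (z : ℤ → MID) (m : ℤ) : ℤ :=
  (∑ i ∈ Finset.Ioc 0 m, if (z i).IsMD then 1 else 0) -
    ∑ i ∈ Finset.Ioc m 0, if (z i).IsMD then 1 else 0

section mdCount

variable (z : ℤ → MID)

theorem mdCount_zero : mdCount z 0 = 0 := by simp [mdCount]

theorem mdCount_add_one (m : ℤ) :
    mdCount z (m + 1) = mdCount z m + if (z (m + 1)).IsMD then 1 else 0 := by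
  rcases le_or_gt 0 m with h | h
  · have h1 : Finset.Ioc m 0 = ∅ := Finset.Ioc_eq_empty (by omega)
    have h2 : Finset.Ioc (m + 1) 0 = ∅ := Finset.Ioc_eq_empty (by omega)
    rw [mdCount, mdCount, h1, h2, ← Finset.insert_Ioc_right_eq_Ioc_add_one h,
      Finset.sum_insert (by simp)]
    ring
  · have h1 : Finset.Ioc 0 (m + 1) = ∅ := Finset.Ioc_eq_empty (by omega)
    have h2 : Finset.Ioc 0 m = ∅ := Finset.Ioc_eq_empty (by omega)
    rw [mdCount, mdCount, h1, h2, ← Finset.insert_Ioc_add_one_left_eq_Ioc h,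
      Finset.sum_insert (by simp)]
    ring

theorem mdCount_add (j k : ℤ) : mdCount z (k + j) = mdCount z j + mdCount (shiftSeq j z) k := by
  have := Int.fun_eq_of_apply_zero_of_add_one (f := fun k => mdCount z (k + j))
    (g := fun k => mdCount z j + mdCount (shiftSeq j z) k)
    (d := fun k => if (z (k + 1 + j)).IsMD then 1 else 0) (by simp [mdCount_zero])
    (fun k => by simp only [add_right_comm k 1 j, mdCount_add_one])
    (fun k => by rw [mdCount_add_one, add_assoc]; rfl)
  exact congrFun this k

theorem mdCount_eq_of_forall_not_isMD {a b : ℤ} (hab : a ≤ b)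
    (h : ∀ i, a < i → i ≤ b → ¬ (z i).IsMD) : mdCount z b = mdCount z a := by
  induction b, hab using Int.leInduction with
  | base => rfl
  | succ b hab ih =>
    rw [mdCount_add_one, if_neg (h _ (by omega) le_rfl), ih fun i h1 h2 => h i h1 (by omega),
      add_zero]

end mdCount

theorem not_isMD_of_lt_of_lt {z : ℤ → MID} {ζ : ℤ → ℤ} (hζ : StrictMono ζ)
    (hζz : ∀ j, (z j).IsMD ↔ ∃ k, ζ k = j) {k i : ℤ} (h1 : ζ k < i) (h2 : i < ζ (k + 1)) :
    ¬ (z i).IsMD := by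
  rintro hi
  obtain ⟨m, rfl⟩ := (hζz i).1 hi
  have := hζ.lt_iff_lt.1 h1
  have := hζ.lt_iff_lt.1 h2
  omega

theorem mdCount_enumeration {z : ℤ → MID} {ζ : ℤ → ℤ} (hζ : StrictMono ζ)
    (hζz : ∀ j, (z j).IsMD ↔ ∃ k, ζ k = j) (h0 : ζ 0 ≤ 0) (h1 : 0 < ζ 1) (k : ℤ) :
    mdCount z (ζ k) = k := by
  have hbase : mdCount z (ζ 0) = 0 := by
    rw [← mdCount_eq_of_forall_not_isMD z h0 fun i hi hi' =>
      not_isMD_of_lt_of_lt hζ hζz (k := 0) hi (by rw [zero_add]; omega), mdCount_zero]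
  have hstep (k : ℤ) : mdCount z (ζ (k + 1)) = mdCount z (ζ k) + 1 := by
    have hlt : ζ k < ζ (k + 1) := hζ (by omega)
    have := mdCount_add_one z (ζ (k + 1) - 1)
    rw [sub_add_cancel, if_pos ((hζz _).2 ⟨_, rfl⟩)] at this
    rw [this, mdCount_eq_of_forall_not_isMD z (a := ζ k) (by omega) fun i hi hi' =>
      not_isMD_of_lt_of_lt hζ hζz hi (by omega)]
  exact congrFun (Int.fun_eq_of_apply_zero_of_add_one (f := fun k => mdCount z (ζ k)) (g := id)
    (d := fun _ => 1) hbase hstep fun _ => rfl) k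

theorem measurable_mdCount (k : ℤ) : Measurable fun z : ℤ → MID => mdCount z k := by
  have hterm (i : ℤ) : Measurable fun z : ℤ → MID => if (z i).IsMD then (1 : ℤ) else 0 :=
    (measurable_from_top (f := fun s : MID => if s.IsMD then (1 : ℤ) else 0)).comp
      (measurable_pi_apply i)
  exact (Finset.measurable_sum _ fun i _ => hterm i).sub (Finset.measurable_sum _ fun i _ => hterm i)

section Scatter

variable {E : Type*}

noncomputable def skewShift (j : ℤ) (p : (ℤ → MID) × (ℤ → E)) : (ℤ → MID) × (ℤ → E) :=
  (shiftSeq j p.1, shiftSeq (mdCount p.1 j) p.2)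

theorem measurePreserving_skewShift [MeasurableSpace E] {κ : Measure (ℤ → MID)}
    {ν : Measure (ℤ → E)} [SFinite κ] [SFinite ν] {j : ℤ}
    (hκ : MeasurePreserving (shiftSeq j) κ κ) (hν : ∀ m, MeasurePreserving (shiftSeq m) ν ν) :
    MeasurePreserving (skewShift j) (κ.prod ν) (κ.prod ν) :=
  hκ.skew_product (g := fun z => shiftSeq (mdCount z j))
    (measurable_pi_lambda _ fun _ => measurable_apply_of_measurable_index measurable_snd
      (measurable_const.add ((measurable_mdCount j).comp measurable_fst)))
    (ae_of_all _ fun _ => (hν _).map_eq)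

variable [Zero E]

noncomputable def scatter (z : ℤ → MID) (x : ℤ → E) (k : ℤ) : E :=
  if (z k).IsMD then x (mdCount z k) else 0

noncomputable def zipScatter (p : (ℤ → MID) × (ℤ → E)) : ℤ → MID × E :=
  fun k => (p.1 k, scatter p.1 p.2 k)

theorem scatter_eq_of_enumeration {z : ℤ → MID} {ζ : ℤ → ℤ} (hζ : StrictMono ζ)
    (hζz : ∀ j, (z j).IsMD ↔ ∃ k, ζ k = j) (h0 : ζ 0 ≤ 0) (h1 : 0 < ζ 1) {x xbar : ℤ → E}
    (hx : ∀ k, xbar (ζ k) = x k) (hx0 : ∀ j, (∀ k, ζ k ≠ j) → xbar j = 0) :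
    xbar = scatter z x := by
  funext j
  by_cases h : (z j).IsMD
  · obtain ⟨k, rfl⟩ := (hζz j).1 h
    rw [scatter, if_pos h, mdCount_enumeration hζ hζz h0 h1, hx]
  · rw [scatter, if_neg h, hx0 j fun k hk => h ((hζz j).2 ⟨k, hk⟩)]

theorem scatter_shiftSeq (z : ℤ → MID) (x : ℤ → E) (j : ℤ) :
    scatter (shiftSeq j z) (shiftSeq (mdCount z j) x) = shiftSeq j (scatter z x) := by
  funext k
  change (if (z (k + j)).IsMD then x (mdCount (shiftSeq j z) k + mdCount z j) else 0) =
    if (z (k + j)).IsMD then x (mdCount z (k + j)) else 0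
  rw [mdCount_add z j k, add_comm (mdCount (shiftSeq j z) k)]

theorem zipScatter_skewShift (j : ℤ) (p : (ℤ → MID) × (ℤ → E)) :
    zipScatter (skewShift j p) = shiftSeq j (zipScatter p) := by
  funext k
  exact congrArg (Prod.mk _) (congrFun (scatter_shiftSeq p.1 p.2 j) k)

theorem measurable_zipScatter [MeasurableSpace E] : Measurable (zipScatter (E := E)) := by
  refine measurable_pi_lambda _ fun k => (measurable_fst.eval).prodMk ?_
  refine Measurable.ite (p := fun p : (ℤ → MID) × (ℤ → E) => (p.1 k).IsMD) ?_ ?_ measurable_const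
  · exact measurableSet_preimage (measurable_fst.eval (a := k)) (t := {s : MID | s.IsMD}) trivial
  · exact measurable_apply_of_measurable_index measurable_snd
      ((measurable_mdCount k).comp measurable_fst)

end Scatter

theorem stmt12_general {Ω : Type*} {mΩ : MeasurableSpace Ω} (P : Measure Ω) [IsProbabilityMeasure P]
    (X : ℤ → Ω → ℝ) (hmX : ∀ k, Measurable (X k))
    (hXstat : IsStationarySeq P X)
    (Z : ℤ → Ω → MID) (hmZ : ∀ k, Measurable (Z k)) (hZstat : IsStationarySeq P Z)
    (hindep : IndepFun (fun ω (k : ℤ) => X k ω) (fun ω (k : ℤ) => Z k ω) P)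
    (ζ : ℤ → Ω → ℤ) (hζmono : ∀ ω, StrictMono (ζ · ω))
    (hζ0 : ∀ ω, ζ 0 ω ≤ 0 ∧ 0 < ζ 1 ω)
    (hζrange : ∀ ω j, (Z j ω = MID.M ∨ Z j ω = MID.D) ↔ ∃ k, ζ k ω = j)
    (Xbar : ℤ → Ω → ℝ)
    (hXbar1 : ∀ ω k, Xbar (ζ k ω) ω = X k ω)
    (hXbar2 : ∀ ω j, (∀ k, ζ k ω ≠ j) → Xbar j ω = 0) :
    IsStationarySeq P (fun k ω => (Z k ω, Xbar k ω)) := by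
  intro j
  have hmZ' : Measurable fun ω k => Z k ω := measurable_pi_lambda _ hmZ
  have hmX' : Measurable fun ω k => X k ω := measurable_pi_lambda _ hmX
  let W ω : (ℤ → MID) × (ℤ → ℝ) := (fun k => Z k ω, fun k => X k ω)
  have hmW : Measurable W := hmZ'.prodMk hmX'
  have hlaw : P.map W = (P.map fun ω k => Z k ω).prod (P.map fun ω k => X k ω) :=
    (indepFun_iff_map_prod_eq_prod_map_map hmZ'.aemeasurable hmX'.aemeasurable).1 hindep.symm
  have hskew := measurePreserving_skewShift (hZstat.measurePreserving_shiftSeq hmZ j)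
    (hXstat.measurePreserving_shiftSeq hmX)
  have hseq : (fun ω k => (Z k ω, Xbar k ω)) = zipScatter ∘ W := funext fun ω =>
    congrArg (fun xbar k => (Z k ω, xbar k)) (scatter_eq_of_enumeration (hζmono ω) (hζrange ω)
      (hζ0 ω).1 (hζ0 ω).2 (hXbar1 ω) (hXbar2 ω))
  have hshift : (fun ω k => (Z (k + j) ω, Xbar (k + j) ω)) = zipScatter ∘ skewShift j ∘ W := by
    funext ω
    rw [Function.comp_apply, Function.comp_apply, zipScatter_skewShift, ← Function.comp_apply
      (f := zipScatter), ← hseq]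
    rfl
  rw [hshift, hseq, ← Measure.map_map measurable_zipScatter (hskew.measurable.comp hmW),
    ← Measure.map_map hskew.measurable hmW, ← Measure.map_map measurable_zipScatter hmW, hlaw,
    hskew.map_eq]

/-- Lemma 4.1: ((Z_k, X̄_k), k ∈ ℤ) is strictly stationary under P. -/
theorem stmt12 {Ω : Type*} {mΩ : MeasurableSpace Ω} (P : Measure Ω) [IsProbabilityMeasure P]
    (X : ℤ → Ω → ℝ) (hmX : ∀ k, Measurable (X k)) (hXpos : ∀ k ω, 0 < X k ω)
    (hXstat : IsStationarySeq P X)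
    (Z : ℤ → Ω → MID) (hmZ : ∀ k, Measurable (Z k)) (hZstat : IsStationarySeq P Z)
    (hZerg : Ergodic (fun f : ℤ → MID => fun k => f (k + 1))
      (P.map (fun ω (k : ℤ) => Z k ω)))
    (hZpos : ∀ s : MID, P {ω | Z 0 ω = s} ≠ 0)
    (hinf : ∀ ω (s : MID) (n : ℤ), (∃ k > n, Z k ω = s) ∧ (∃ k < n, Z k ω = s))
    (hindep : IndepFun (fun ω (k : ℤ) => X k ω) (fun ω (k : ℤ) => Z k ω) P)
    (ζ : ℤ → Ω → ℤ) (hζmono : ∀ ω, StrictMono (ζ · ω))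
    (hζ0 : ∀ ω, ζ 0 ω ≤ 0 ∧ 0 < ζ 1 ω)
    (hζrange : ∀ ω j, (Z j ω = MID.M ∨ Z j ω = MID.D) ↔ ∃ k, ζ k ω = j)
    (Xbar : ℤ → Ω → ℝ)
    (hXbar1 : ∀ ω k, Xbar (ζ k ω) ω = X k ω)
    (hXbar2 : ∀ ω j, (∀ k, ζ k ω ≠ j) → Xbar j ω = 0) :
    IsStationarySeq P (fun k ω => (Z k ω, Xbar k ω)) :=
  stmt12_general (mΩ := mΩ) P X hmX hXstat Z hmZ hZstat hindep ζ hζmono hζ0 hζrange Xbar hXbar1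
    hXbar2
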